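/- arXiv:2206.11893 — 2 statements merged into one kernel-verified Lean document; each statement's English description precedes it below -/
import Mathlib

section
/- Let A be the HiPPO-LegS matrix and P the vector with Pₙ = (n + 1/2)^{1/2}. Then A^{(N)} := A + P Pᵀ satisfies: A^{(N)} + (A^{(N)})ᵀ = -I, i.e., A^{(N)} + (1/2)I is skew-symmetric. In particular A^{(N)} is a normal matrix and every eigenvalue of A^{(N)} has real part -1/2. -/
/-!
Since √(2n+1)·√(2k+1) = 2·Pₙ·P_k, adding P Pᵀ turns the strictly lower triangle of A into
-Pₙ P_k, puts +Pₙ P_k above the diagonal and -1/2 on it, so A^{(N)} + (A^{(N)})ᵀ = -I.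
Then (A^{(N)})ᵀ = -I - A^{(N)} commutes with A^{(N)}, and for an eigenvector v of M = A^{(N)}
over ℂ the quadratic form v* (M + Mᴴ) v = 2 Re(μ) |v|² equals -|v|², forcing Re μ = -1/2.
-/

open Matrix
open scoped ComplexOrder

theorem Matrix.exists_mulVec_eq_smul_of_mem_spectrum {K n : Type*} [Field K] [Fintype n]
    [DecidableEq n] {M : Matrix n n K} {μ : K} (hμ : μ ∈ spectrum K M) :
    ∃ v ≠ 0, M *ᵥ v = μ • v := by
  rw [← Matrix.spectrum_toLin', ← Module.End.hasEigenvalue_iff_mem_spectrum] at hμ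
  obtain ⟨v, hv⟩ := hμ.exists_hasEigenvector
  exact ⟨v, hv.right, by simpa using hv.apply_eq_smul⟩

theorem Matrix.re_eq_of_mem_spectrum_of_add_conjTranspose_eq_smul_one {𝕜 n : Type*} [RCLike 𝕜]
    [Fintype n] [DecidableEq n] {M : Matrix n n 𝕜} {c : ℝ} (hM : M + Mᴴ = (c : 𝕜) • 1)
    {μ : 𝕜} (hμ : μ ∈ spectrum 𝕜 M) : RCLike.re μ = c / 2 := by
  obtain ⟨v, hv0, hv⟩ := exists_mulVec_eq_smul_of_mem_spectrum hμ
  have hs : star v ⬝ᵥ v ≠ 0 := by rwa [ne_eq, dotProduct_star_self_eq_zero]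
  have hquad : star v ⬝ᵥ ((M + Mᴴ) *ᵥ v) = (μ + star μ) * (star v ⬝ᵥ v) := by
    rw [add_mulVec, dotProduct_add, dotProduct_mulVec _ Mᴴ, ← star_mulVec, hv, star_smul,
      dotProduct_smul, smul_dotProduct, smul_eq_mul, smul_eq_mul, add_mul]
  rw [hM, smul_mulVec, one_mulVec, dotProduct_smul, smul_eq_mul] at hquad
  have hsum : μ + star μ = c := (mul_right_cancel₀ hs hquad).symm
  rw [RCLike.star_def, RCLike.add_conj] at hsum
  have : 2 * RCLike.re μ = c := by exact_mod_cast hsum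
  linarith

theorem Real.sqrt_two_mul_add_one_mul_sqrt_two_mul_add_one (x y : ℝ) :
    √(2 * x + 1) * √(2 * y + 1) = 2 * (√(x + 1 / 2) * √(y + 1 / 2)) := by
  have hsplit (z : ℝ) : √(2 * z + 1) = √2 * √(z + 1 / 2) := by
    rw [← Real.sqrt_mul zero_le_two]; ring_nf
  rw [hsplit, hsplit]
  linear_combination (√(x + 1 / 2) * √(y + 1 / 2)) * Real.mul_self_sqrt zero_le_two

theorem hippo_add_vecMulVec_add_transpose (N : ℕ)
    (A : Matrix (Fin N) (Fin N) ℝ)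
    (hA : ∀ n k : Fin N, A n k =
      if (k : ℕ) < (n : ℕ) then
        -(Real.sqrt (2 * (n : ℝ) + 1) * Real.sqrt (2 * (k : ℝ) + 1))
      else if n = k then -((n : ℝ) + 1) else 0)
    (P : Fin N → ℝ) (hP : ∀ n, P n = Real.sqrt ((n : ℝ) + 1/2)) :
    A + vecMulVec P P + (A + vecMulVec P P)ᵀ = -1 := by
  ext n k
  simp only [Matrix.add_apply, transpose_apply, vecMulVec_apply, hA, hP, Matrix.neg_apply,
    one_apply, Fin.val_fin_lt, Real.sqrt_two_mul_add_one_mul_sqrt_two_mul_add_one]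
  rcases lt_trichotomy n k with h | rfl | h
  · simp only [h, lt_asymm h, h.ne, ↓reduceIte]
    ring
  · have hn : (0 : ℝ) ≤ n + 1 / 2 := by positivity
    simp only [lt_irrefl, ↓reduceIte, Real.mul_self_sqrt hn]
    ring
  · simp only [h, lt_asymm h, h.ne, h.ne', ↓reduceIte]
    ring

theorem hippo_normal_matrix (N : ℕ)
    (A : Matrix (Fin N) (Fin N) ℝ)
    (hA : ∀ n k : Fin N, A n k =
      if (k : ℕ) < (n : ℕ) then
        -(Real.sqrt (2 * (n : ℝ) + 1) * Real.sqrt (2 * (k : ℝ) + 1))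
      else if n = k then -((n : ℝ) + 1) else 0)
    (P : Fin N → ℝ) (hP : ∀ n, P n = Real.sqrt ((n : ℝ) + 1/2))
    (AN : Matrix (Fin N) (Fin N) ℝ) (hAN : AN = A + Matrix.vecMulVec P P) :
    AN + ANᵀ = -1 ∧
    AN * ANᵀ = ANᵀ * AN ∧
    ∀ μ ∈ spectrum ℂ (AN.map (Complex.ofReal)), μ.re = -1/2 := by
  have hsum : AN + ANᵀ = -1 := hAN ▸ hippo_add_vecMulVec_add_transpose N A hA P hP
  refine ⟨hsum, ?_, fun μ hμ => ?_⟩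
  · rw [eq_sub_of_add_eq' hsum]
    exact ((Commute.neg_one_right AN).sub_right (Commute.refl AN)).eq
  · have hsumℂ :
        AN.map Complex.ofReal + (AN.map Complex.ofReal)ᴴ = ((-1 : ℝ) : ℂ) • 1 := by
      rw [← conjTranspose_map _ (fun _ => by simp), conjTranspose_eq_transpose_of_trivial,
        ← Matrix.map_add _ (by simp), hsum, Matrix.map_neg _ (by simp),
        Matrix.map_one _ (by simp) (by simp)]
      simp
    -- without `c := -1` unification unfolds `-1` to `Real.neg 1`, which `norm_num` cannot read
    have hre := re_eq_of_mem_spectrum_of_add_conjTranspose_eq_smul_one (c := -1) hsumℂ hμ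
    exact hre.trans (by norm_num)
end

section
/- Let A be the HiPPO-LegS matrix and B the vector with Bₙ = (2n+1)^{1/2}. Then A can be written as A = A^{(N)} - P Pᵀ where P = B/√2, i.e., the low-rank correction P Pᵀ equals (1/2) B Bᵀ. -/
lemma sqrt_prod (x y : ℝ) (hx : 0 ≤ x) (hy : 0 ≤ y) :
    Real.sqrt (x + 1/2) * Real.sqrt (y + 1/2)
      = (1/2) * (Real.sqrt (2*x+1) * Real.sqrt (2*y+1)) := by
  rw [← Real.sqrt_mul (by linarith), ← Real.sqrt_mul (by linarith)]
  have h4 : Real.sqrt 4 = 2 := by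
    rw [show (4:ℝ) = 2^2 by norm_num, Real.sqrt_sq (by norm_num)]
  have : (x+1/2)*(y+1/2) = ((2*x+1)*(2*y+1))/4 := by ring
  rw [this, Real.sqrt_div (by nlinarith), h4]
  ring

theorem hippo_dplr_decomposition (N : ℕ)
    (A : Matrix (Fin N) (Fin N) ℝ)
    (hA : ∀ n k : Fin N, A n k =
      if (k : ℕ) < (n : ℕ) then
        -(Real.sqrt (2 * (n : ℝ) + 1) * Real.sqrt (2 * (k : ℝ) + 1))
      else if n = k then -((n : ℝ) + 1) else 0)
    (AN : Matrix (Fin N) (Fin N) ℝ)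
    (hAN : ∀ n k : Fin N, AN n k =
      if (k : ℕ) < (n : ℕ) then
        -(Real.sqrt ((n : ℝ) + 1/2) * Real.sqrt ((k : ℝ) + 1/2))
      else if n = k then -(1/2)
      else Real.sqrt ((n : ℝ) + 1/2) * Real.sqrt ((k : ℝ) + 1/2))
    (B P : Fin N → ℝ)
    (hB : ∀ n, B n = Real.sqrt (2 * (n : ℝ) + 1))
    (hP : ∀ n, P n = Real.sqrt ((n : ℝ) + 1/2)) :
    A = AN - Matrix.vecMulVec P P ∧
    Matrix.vecMulVec P P = (1/2 : ℝ) • Matrix.vecMulVec B B := by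
  constructor
  · ext n k
    have hn : (0:ℝ) ≤ (n:ℝ) := Nat.cast_nonneg _
    have hk : (0:ℝ) ≤ (k:ℝ) := Nat.cast_nonneg _
    have key := sqrt_prod (n:ℝ) (k:ℝ) hn hk
    rw [Matrix.sub_apply, Matrix.vecMulVec_apply, hA, hAN, hP, hP]
    rcases lt_trichotomy (k:ℕ) (n:ℕ) with h | h | h
    · simp only [if_pos h]; linarith
    · have hnk : n = k := Fin.ext h.symm
      subst hnk
      have hsq : Real.sqrt ((n:ℝ)+1/2) * Real.sqrt ((n:ℝ)+1/2) = (n:ℝ)+1/2 :=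
        Real.mul_self_sqrt (by linarith)
      rw [if_neg (lt_irrefl (n:ℕ)), if_neg (lt_irrefl (n:ℕ)), if_pos rfl, if_pos rfl, hsq]
      ring
    · have h1 : ¬ (k:ℕ) < (n:ℕ) := by omega
      have h2 : n ≠ k := by intro he; subst he; exact lt_irrefl _ h
      simp only [if_neg h1, if_neg h2]; ring
  · ext n k
    have hn : (0:ℝ) ≤ (n:ℝ) := Nat.cast_nonneg _
    have hk : (0:ℝ) ≤ (k:ℝ) := Nat.cast_nonneg _
    rw [Matrix.smul_apply, Matrix.vecMulVec_apply, Matrix.vecMulVec_apply,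
      hP, hP, hB, hB, sqrt_prod (n:ℝ) (k:ℝ) hn hk, smul_eq_mul]
end
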